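/- arXiv:2509.08799 — 2 statements merged into one kernel-verified Lean document; each statement's English description precedes it below -/
import Mathlib

section
/- Suppose 0 < ε < 1 and ψ ∈ ℝ^N satisfies G^ε_i(ψ) = α_i for every i (equivalently, ψ maximizes K^ε). Then r² ≤ ψ_i ≤ R² for every i ∈ {1,…,N}, where r = α_min/(2ρ_max) and R = (1 + diam(spt ρ ∪ {y_1,…,y_N})²)^{1/2}. -/
/-
Upper bound: if some `ψ_k` exceeded `1 + D²`, with `D` the diameter of `spt ρ ∪ {y_j}`,
then on `spt ρ` every cell would have potential
`ψ_j − (x − y_j)² ≥ ψ_k − (x − y_k)² > 1 > ε²`, so the regularized weight would be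
identically `1` there and `Σ_j G^ε_j(ψ)` would be the total mass `1`, contradicting
`Σ_j α_j < 1`.
Lower bound: the weight vanishes outside the interval `|x − y_i| ≤ √ψ_i⁺`, so
`α_i = G^ε_i(ψ) ≤ 2 ρ_max √ψ_i⁺`.
-/

open MeasureTheory Real Filter Set

noncomputable section

/-- The (unrestricted) one-dimensional Laguerre cell of index `i`. -/
def Lag1 {N : ℕ} (y ψ : Fin N → ℝ) (i : Fin N) : Set ℝ :=
  {x : ℝ | ∀ j, (x - y i) ^ 2 - ψ i ≤ (x - y j) ^ 2 - ψ j}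

/-- The regularized mass of the `i`-th Laguerre cell,
`G^ε_i(ψ) = ∫_{Lag_i(ψ)} min(√(max(ψ_i − (x−y_i)², 0))/ε, 1) ρ(x) dx`. -/
def Greg {N : ℕ} (y : Fin N → ℝ) (f : ℝ → ℝ) (ε : ℝ) (ψ : Fin N → ℝ) (i : Fin N) : ℝ :=
  ∫ x in Lag1 y ψ i, min (Real.sqrt (max (ψ i - (x - y i) ^ 2) 0) / ε) 1 * f x

lemma measurableSet_lag1 {N : ℕ} (y ψ : Fin N → ℝ) (i : Fin N) :
    MeasurableSet (Lag1 y ψ i) := by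
  have h : Lag1 y ψ i = ⋂ j, {x : ℝ | (x - y i) ^ 2 - ψ i ≤ (x - y j) ^ 2 - ψ j} := by
    ext x; simp [Lag1]
  rw [h]
  exact MeasurableSet.iInter fun j => measurableSet_le (by fun_prop) (by fun_prop)

lemma iUnion_lag1 {N : ℕ} [Nonempty (Fin N)] (y ψ : Fin N → ℝ) :
    ⋃ j, Lag1 y ψ j = univ := by
  refine eq_univ_of_forall fun x => mem_iUnion.2 ?_
  obtain ⟨j, -, hj⟩ := Finset.exists_min_image Finset.univ
    (fun j => (x - y j) ^ 2 - ψ j) Finset.univ_nonempty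
  exact ⟨j, fun k => hj k (Finset.mem_univ k)⟩

lemma sub_sq_le_of_mem_lag1 {N : ℕ} {y ψ : Fin N → ℝ} {j : Fin N} {x : ℝ}
    (hx : x ∈ Lag1 y ψ j) (k : Fin N) : ψ k - (x - y k) ^ 2 ≤ ψ j - (x - y j) ^ 2 := by
  linarith [hx k]

/-- The weight `(f*_ε)'(t)` of `G^ε`. -/
def regWeight (ε t : ℝ) : ℝ := min (√(max t 0) / ε) 1

lemma greg_eq_integral_regWeight {N : ℕ} (y : Fin N → ℝ) (f : ℝ → ℝ) (ε : ℝ)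
    (ψ : Fin N → ℝ) (i : Fin N) :
    Greg y f ε ψ i = ∫ x in Lag1 y ψ i, regWeight ε (ψ i - (x - y i) ^ 2) * f x :=
  rfl

section regWeight

variable {ε t : ℝ}

lemma regWeight_nonneg (hε : 0 ≤ ε) : 0 ≤ regWeight ε t :=
  le_min (div_nonneg (sqrt_nonneg _) hε) zero_le_one

lemma regWeight_le_one : regWeight ε t ≤ 1 := min_le_right _ _

lemma regWeight_of_nonpos (ht : t ≤ 0) : regWeight ε t = 0 := by
  simp [regWeight, max_eq_right ht]

lemma regWeight_of_sq_le (hε : 0 < ε) (ht : ε ^ 2 ≤ t) : regWeight ε t = 1 := by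
  refine min_eq_right ((one_le_div hε).2 ?_)
  rw [max_eq_left ((sq_nonneg ε).trans ht)]
  exact le_sqrt_of_sq_le ht

lemma measurable_regWeight : Measurable (regWeight ε) := by
  unfold regWeight; fun_prop

end regWeight

lemma sub_sq_le_sq_diam {s : Set ℝ} (hs : Bornology.IsBounded s) {x z : ℝ} (hx : x ∈ s)
    (hz : z ∈ s) : (x - z) ^ 2 ≤ Metric.diam s ^ 2 := by
  have h := Metric.dist_le_diam_of_mem hs hx hz
  rw [Real.dist_eq] at h
  rw [← sq_abs]
  exact pow_le_pow_left₀ (abs_nonneg _) h 2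

lemma integral_le_sum_setIntegral_of_iUnion_eq_univ {α ι : Type*} [MeasurableSpace α]
    [Fintype ι] {μ : Measure α} {f : α → ℝ} {s : ι → Set α}
    (hs : ∀ i, MeasurableSet (s i)) (hcover : ⋃ i, s i = univ) (hf0 : ∀ x, 0 ≤ f x)
    (hf : Integrable f μ) :
    ∫ x, f x ∂μ ≤ ∑ i, ∫ x in s i, f x ∂μ := by
  have hind : ∀ i, Integrable ((s i).indicator f) μ := fun i => hf.indicator (hs i)
  have hle : ∀ x, f x ≤ ∑ i, (s i).indicator f x := by
    intro x
    obtain ⟨i, hi⟩ := mem_iUnion.1 (hcover.symm ▸ mem_univ x : x ∈ ⋃ i, s i)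
    calc f x = (s i).indicator f x := (indicator_of_mem hi f).symm
      _ ≤ ∑ i, (s i).indicator f x :=
        Finset.single_le_sum (f := fun i => (s i).indicator f x)
          (fun j _ => indicator_apply_nonneg fun _ => hf0 x) (Finset.mem_univ i)
  calc ∫ x, f x ∂μ ≤ ∫ x, ∑ i, (s i).indicator f x ∂μ :=
        integral_mono hf (integrable_finsetSum _ fun i _ => hind i) hle
    _ = ∑ i, ∫ x in s i, f x ∂μ := by
        rw [integral_finsetSum _ fun i _ => hind i]
        simp only [integral_indicator (hs _)]

section Greg

variable {N : ℕ} {y : Fin N → ℝ} {f : ℝ → ℝ} {ε : ℝ} {ψ : Fin N → ℝ}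

lemma greg_eq_setIntegral_of_sq_le {s : Set ℝ} {j : Fin N} (hε : 0 < ε)
    (hsupp : ∀ x ∉ s, f x = 0)
    (hsq : ∀ x ∈ s ∩ Lag1 y ψ j, ε ^ 2 ≤ ψ j - (x - y j) ^ 2) :
    Greg y f ε ψ j = ∫ x in Lag1 y ψ j, f x := by
  rw [greg_eq_integral_regWeight]
  refine setIntegral_congr_fun (measurableSet_lag1 y ψ j) fun x hx => ?_
  by_cases hxs : x ∈ s
  · simp only [regWeight_of_sq_le hε (hsq x ⟨hxs, hx⟩), one_mul]
  · simp [hsupp x hxs]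

lemma integral_le_sum_greg_of_lt {s : Set ℝ} (hs : Bornology.IsBounded s) (hε : 0 < ε)
    (hε1 : ε ≤ 1) (hf0 : ∀ x, 0 ≤ f x) (hsupp : ∀ x ∉ s, f x = 0) (hf : Integrable f)
    {k : Fin N} (hk : 1 + Metric.diam (s ∪ range y) ^ 2 < ψ k) :
    ∫ x, f x ≤ ∑ j, Greg y f ε ψ j := by
  have : Nonempty (Fin N) := ⟨k⟩
  have hbdd : Bornology.IsBounded (s ∪ range y) := hs.union (finite_range y).isBounded
  have hsq : ∀ j, ∀ x ∈ s ∩ Lag1 y ψ j, ε ^ 2 ≤ ψ j - (x - y j) ^ 2 := by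
    rintro j x ⟨hxs, hx⟩
    have hdist := sub_sq_le_sq_diam hbdd (mem_union_left _ hxs) (mem_union_right _ ⟨k, rfl⟩)
    have hε2 : ε ^ 2 ≤ 1 := pow_le_one₀ hε.le hε1
    linarith [sub_sq_le_of_mem_lag1 hx k]
  rw [Finset.sum_congr rfl fun j _ => greg_eq_setIntegral_of_sq_le hε hsupp (hsq j)]
  exact integral_le_sum_setIntegral_of_iUnion_eq_univ (measurableSet_lag1 y ψ)
    (iUnion_lag1 y ψ) hf0 hf

lemma greg_le_mul_sqrt {M : ℝ} (hfm : Measurable f) (hf0 : ∀ x, 0 ≤ f x)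
    (hfM : ∀ x, f x ≤ M) (hε : 0 ≤ ε) (i : Fin N) :
    Greg y f ε ψ i ≤ M * (2 * √(max (ψ i) 0)) := by
  set r := √(max (ψ i) 0)
  set g : ℝ → ℝ := fun x => regWeight ε (ψ i - (x - y i) ^ 2) * f x
  set I := Icc (y i - r) (y i + r)
  have hg0 : ∀ x, 0 ≤ g x := fun x => mul_nonneg (regWeight_nonneg hε) (hf0 x)
  have hgI : ∀ x, g x ≤ I.indicator (fun _ => M) x := by
    intro x
    by_cases hx : x ∈ I
    · rw [indicator_of_mem hx]
      exact (mul_le_of_le_one_left (hf0 x) regWeight_le_one).trans (hfM x)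
    · have hfar : ψ i ≤ (x - y i) ^ 2 := by
        by_contra! hlt
        have h := abs_le.1 (abs_le_sqrt (hlt.le.trans (le_max_left _ 0)))
        exact hx ⟨by linarith [h.1], by linarith [h.2]⟩
      simp [g, I, indicator_of_notMem hx, regWeight_of_nonpos (sub_nonpos.2 hfar)]
  have hIint : Integrable (I.indicator fun _ => M) :=
    (integrable_indicator_iff measurableSet_Icc).2 (integrableOn_const measure_Icc_lt_top.ne)
  have hgm : Measurable g := (measurable_regWeight.comp (by fun_prop)).mul hfm
  have hgint : Integrable g :=
    hIint.mono' hgm.aestronglyMeasurable (ae_of_all _ fun x => by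
      rw [Real.norm_eq_abs, abs_of_nonneg (hg0 x)]; exact hgI x)
  calc Greg y f ε ψ i = ∫ x in Lag1 y ψ i, g x := rfl
    _ ≤ ∫ x, g x := setIntegral_le_integral hgint (ae_of_all _ hg0)
    _ ≤ ∫ x, I.indicator (fun _ => M) x := integral_mono hgint hIint hgI
    _ = M * (2 * r) := by
      rw [integral_indicator_const _ measurableSet_Icc, smul_eq_mul, volume_real_Icc_of_le]
      · ring
      · linarith [sqrt_nonneg (max (ψ i) 0)]

end Greg

lemma sq_div_le_of_le_mul_sqrt {a M t : ℝ} (ha : 0 < a) (hM : 0 < M)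
    (h : a ≤ M * (2 * √(max t 0))) : (a / (2 * M)) ^ 2 ≤ t := by
  have hr : 0 < a / (2 * M) := by positivity
  have hle : a / (2 * M) ≤ √(max t 0) := by
    rw [div_le_iff₀ (by positivity)]
    linarith
  exact (le_max_iff.1 ((le_sqrt' hr).1 hle)).resolve_right (pow_pos hr 2).not_ge

theorem stmt11_general {N : ℕ} (c e ρmin ρmax : ℝ)
    (f : ℝ → ℝ) (hfm : Measurable f) (hf0 : ∀ x, 0 ≤ f x)
    (hsupp : ∀ x, x ∉ Set.Icc c e → f x = 0)
    (hρmin : 0 < ρmin) (hρ : ρmin ≤ ρmax)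
    (hbd : ∀ x ∈ Set.Icc c e, ρmin ≤ f x ∧ f x ≤ ρmax)
    (hint : ∫ x, f x = 1)
    (y : Fin N → ℝ)
    (α : Fin N → ℝ) (hα : ∀ i, 0 < α i) (hαs : ∑ i, α i < 1)
    (ε : ℝ) (hε : 0 < ε) (hε1 : ε < 1)
    (ψ : Fin N → ℝ) (hopt : ∀ i, Greg y f ε ψ i = α i) :
    ∀ i, ((⨅ j, α j) / (2 * ρmax)) ^ 2 ≤ ψ i ∧
      ψ i ≤ (Real.sqrt (1 + (Metric.diam (Set.Icc c e ∪ Set.range y)) ^ 2)) ^ 2 := by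
  intro i
  have : Nonempty (Fin N) := ⟨i⟩
  have hρmax : 0 < ρmax := hρmin.trans_le hρ
  have hfle : ∀ x, f x ≤ ρmax := fun x => by
    by_cases hx : x ∈ Icc c e
    · exact (hbd x hx).2
    · rw [hsupp x hx]; exact hρmax.le
  have hf : Integrable f := by
    refine IntegrableOn.integrable_of_forall_notMem_eq_zero ?_ hsupp
    exact .of_bound measure_Icc_lt_top hfm.aestronglyMeasurable ρmax
      (ae_of_all _ fun x => by rw [norm_of_nonneg (hf0 x)]; exact hfle x)
  constructor
  · obtain ⟨j, hj⟩ := exists_eq_ciInf_of_finite (f := α)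
    refine sq_div_le_of_le_mul_sqrt (hj ▸ hα j) hρmax ?_
    calc ⨅ j, α j ≤ α i := ciInf_le (finite_range α).bddBelow i
      _ = Greg y f ε ψ i := (hopt i).symm
      _ ≤ _ := greg_le_mul_sqrt hfm hf0 hfle hε.le i
  · rw [sq_sqrt (by positivity)]
    by_contra! hlt
    have h := integral_le_sum_greg_of_lt (Metric.isBounded_Icc c e) hε hε1.le hf0 hsupp hf hlt
    simp only [hopt, hint] at h
    linarith

/-- if `0 < ε < 1` and `ψ` satisfies the optimality conditions
`G^ε_i(ψ) = α_i`, then `r² ≤ ψ_i ≤ R²` for every `i`, with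
`r = α_min/(2ρ_max)` and `R = √(1 + diam(spt ρ ∪ {y_1,…,y_N})²)`. -/
theorem stmt11 {N : ℕ} (hN : 0 < N) (c e ρmin ρmax : ℝ) (hce : c < e)
    (f : ℝ → ℝ) (hfm : Measurable f) (hf0 : ∀ x, 0 ≤ f x)
    (hsupp : ∀ x, x ∉ Set.Icc c e → f x = 0)
    (hcont : ContinuousOn f (Set.Icc c e))
    (hρmin : 0 < ρmin) (hρ : ρmin ≤ ρmax)
    (hbd : ∀ x ∈ Set.Icc c e, ρmin ≤ f x ∧ f x ≤ ρmax)
    (hint : ∫ x, f x = 1)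
    (y : Fin N → ℝ) (hy : StrictMono y)
    (α : Fin N → ℝ) (hα : ∀ i, 0 < α i) (hαs : ∑ i, α i < 1)
    (ε : ℝ) (hε : 0 < ε) (hε1 : ε < 1)
    (ψ : Fin N → ℝ) (hopt : ∀ i, Greg y f ε ψ i = α i) :
    ∀ i, ((⨅ j, α j) / (2 * ρmax)) ^ 2 ≤ ψ i ∧
      ψ i ≤ (Real.sqrt (1 + (Metric.diam (Set.Icc c e ∪ Set.range y)) ^ 2)) ^ 2 :=
  stmt11_general c e ρmin ρmax f hfm hf0 hsupp hρmin hρ hbd hint y α hα hαs ε hε hε1 ψ hopt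
end
end

section
/- Let ρ be the uniform probability measure on [0,1], N = 1, y_1 = 0, α_1 = 1/2, and for ε > 0 and ψ > 0 let G^ε(ψ) = ∫₀¹ min(√(max(ψ − x², 0))/ε, 1) dx. For all sufficiently small ε > 0 there is a unique ψ^ε > 0 with G^ε(ψ^ε) = 1/2 (the maximizer of the regularized dual functional), and as ε → 0⁺ one has ψ^ε → 1/4 and (ψ^ε − 1/4)/ε² → 1/3; in particular the quadratic convergence rate ‖ψ^ε − ψ*‖ ≲ ε² is tight. -/
/-! For `ε² ≤ ψ ≤ 1` put `a = √(ψ - ε²)` and `b = √ψ`. The integrand of `G16` is `1` on `[0, a]`,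
`√(ψ - x²)/ε` on `[a, b]` and `0` beyond `b`, so `G16 ε ψ = a + ε⁻¹ ∫_a^b √(ψ - x²)`. Writing
`ψ - x² = (b + x)(b - x)` with `a + b ≤ b + x ≤ 2b`, comparison with
`∫_a^b √(b - x) = ⅔ (b - a)^{3/2}` and `(b - a)(a + b) = ε²` give
`(b - a)(1 - ⅔ √(2b/(a + b))) ≤ b - G16 ε ψ ≤ (b - a)/3`.
Hence `a ≤ G16 ε ψ ≤ b`, so `G16 ε = 1/2` has a root in `[1/4, 1/4 + ε²]` by the intermediate value
theorem. It is unique because `G16 ε ψ₁ < G16 ε ψ₂` whenever `0 ≤ ψ₁ < ψ₂` and `ψ₁ ≤ 1`: at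
`x = √ψ₁` the first integrand vanishes while the second does not. At the root,
`(ψ - 1/4)/ε² = (b + 1/2)/(a + b) · (b - 1/2)/(b - a)`, and as `a, b → 1/2` both bounds on the last
factor tend to `1/3`. -/

open MeasureTheory Real Filter Set

noncomputable section

def G16 (ε ψ : ℝ) : ℝ :=
  ∫ x in Set.Icc (0 : ℝ) 1, min (Real.sqrt (max (ψ - x ^ 2) 0) / ε) 1

open Topology

def cellWeight (ε ψ x : ℝ) : ℝ := min (√(max (ψ - x ^ 2) 0) / ε) 1

lemma continuous_cellWeight (ε ψ : ℝ) : Continuous (cellWeight ε ψ) := by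
  unfold cellWeight
  fun_prop

lemma G16_eq_intervalIntegral (ε ψ : ℝ) : G16 ε ψ = ∫ x in (0 : ℝ)..1, cellWeight ε ψ x := by
  rw [G16, integral_Icc_eq_integral_Ioc, intervalIntegral.integral_of_le zero_le_one]
  rfl

lemma continuous_G16 (ε : ℝ) : Continuous (G16 ε) := by
  rw [funext (G16_eq_intervalIntegral ε)]
  exact intervalIntegral.continuous_parametric_intervalIntegral_of_continuous'
    (by unfold cellWeight; fun_prop) 0 1

lemma cellWeight_mono {ε ψ₁ ψ₂ : ℝ} (hε : 0 ≤ ε) (h : ψ₁ ≤ ψ₂) (x : ℝ) :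
    cellWeight ε ψ₁ x ≤ cellWeight ε ψ₂ x := by
  unfold cellWeight
  gcongr

lemma cellWeight_eq_one {ε ψ x : ℝ} (hε : 0 < ε) (hx : x ^ 2 ≤ ψ - ε ^ 2) :
    cellWeight ε ψ x = 1 := by
  have : ε ≤ √(ψ - x ^ 2) := (Real.le_sqrt hε.le (by nlinarith)).2 (by linarith)
  rw [cellWeight, max_eq_left (by nlinarith), min_eq_right ((one_le_div hε).2 this)]

lemma cellWeight_eq_div {ε ψ x : ℝ} (hε : 0 < ε) (h₁ : ψ - ε ^ 2 ≤ x ^ 2) (h₂ : x ^ 2 ≤ ψ) :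
    cellWeight ε ψ x = √(ψ - x ^ 2) / ε := by
  have : √(ψ - x ^ 2) ≤ ε := (Real.sqrt_le_left hε.le).2 (by linarith)
  rw [cellWeight, max_eq_left (by linarith), min_eq_left ((div_le_one hε).2 this)]

lemma cellWeight_eq_zero {ε ψ x : ℝ} (hx : ψ ≤ x ^ 2) : cellWeight ε ψ x = 0 := by
  simp [cellWeight, max_eq_right (sub_nonpos.2 hx)]

lemma integral_sqrt_sub {a b : ℝ} (hab : a ≤ b) :
    ∫ x in a..b, √(b - x) = 2 / 3 * ((b - a) * √(b - a)) := by
  rw [intervalIntegral.integral_comp_sub_left (fun u => √u) b, sub_self]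
  have hba : 0 ≤ b - a := sub_nonneg.2 hab
  simp_rw [Real.sqrt_eq_rpow]
  rw [integral_rpow (Or.inl (by norm_num)), Real.zero_rpow (by norm_num),
    show (1 : ℝ) / 2 + 1 = 1 + 1 / 2 by norm_num, Real.rpow_add' hba (by norm_num), Real.rpow_one]
  ring

lemma integral_sqrt_sub_sq_bounds {a b ψ : ℝ} (ha : 0 ≤ a) (hab : a ≤ b) (hb : b ^ 2 = ψ) :
    √(a + b) * (2 / 3 * ((b - a) * √(b - a))) ≤ ∫ x in a..b, √(ψ - x ^ 2) ∧
      ∫ x in a..b, √(ψ - x ^ 2) ≤ √(2 * b) * (2 / 3 * ((b - a) * √(b - a))) := by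
  have hfactor : ∀ x, ψ - x ^ 2 = (b + x) * (b - x) := fun x => by rw [← hb]; ring
  have hint (c : ℝ) : ∫ x in a..b, √c * √(b - x) = √c * (2 / 3 * ((b - a) * √(b - a))) := by
    rw [intervalIntegral.integral_const_mul, integral_sqrt_sub hab]
  rw [← hint, ← hint]
  constructor
  · refine intervalIntegral.integral_mono_on hab (Continuous.intervalIntegrable (by fun_prop) _ _)
      (Continuous.intervalIntegrable (by fun_prop) _ _) fun x hx => ?_
    rw [← Real.sqrt_mul (by linarith), hfactor]
    exact Real.sqrt_le_sqrt (mul_le_mul_of_nonneg_right (by linarith [hx.1]) (by linarith [hx.2]))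
  · refine intervalIntegral.integral_mono_on hab (Continuous.intervalIntegrable (by fun_prop) _ _)
      (Continuous.intervalIntegrable (by fun_prop) _ _) fun x hx => ?_
    rw [← Real.sqrt_mul (by linarith), hfactor]
    exact Real.sqrt_le_sqrt (mul_le_mul_of_nonneg_right (by linarith [hx.2]) (by linarith [hx.2]))

lemma G16_eq {ε ψ : ℝ} (hε : 0 < ε) (hεψ : ε ^ 2 ≤ ψ) (hψ : ψ ≤ 1) :
    G16 ε ψ = √(ψ - ε ^ 2) + (∫ x in √(ψ - ε ^ 2)..√ψ, √(ψ - x ^ 2)) / ε := by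
  set a := √(ψ - ε ^ 2)
  set b := √ψ
  have ha : 0 ≤ a := Real.sqrt_nonneg _
  have hab : a ≤ b := Real.sqrt_le_sqrt (sub_le_self _ (sq_nonneg ε))
  have hb : b ≤ 1 := Real.sqrt_le_one.2 hψ
  have ha2 : a ^ 2 = ψ - ε ^ 2 := Real.sq_sqrt (sub_nonneg.2 hεψ)
  have hb2 : b ^ 2 = ψ := Real.sq_sqrt (by nlinarith)
  have hi (u v : ℝ) : IntervalIntegrable (cellWeight ε ψ) volume u v :=
    (continuous_cellWeight ε ψ).intervalIntegrable u v
  have h₁ : ∫ x in (0 : ℝ)..a, cellWeight ε ψ x = a := by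
    rw [intervalIntegral.integral_congr (g := fun _ => 1) fun x hx => ?_]
    · simp
    rw [uIcc_of_le ha] at hx
    exact cellWeight_eq_one hε (ha2 ▸ pow_le_pow_left₀ hx.1 hx.2 2)
  have h₂ : ∫ x in a..b, cellWeight ε ψ x = (∫ x in a..b, √(ψ - x ^ 2)) / ε := by
    rw [← intervalIntegral.integral_div]
    refine intervalIntegral.integral_congr fun x hx => ?_
    rw [uIcc_of_le hab] at hx
    exact cellWeight_eq_div hε (ha2 ▸ pow_le_pow_left₀ ha hx.1 2)
      (hb2 ▸ pow_le_pow_left₀ (ha.trans hx.1) hx.2 2)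
  have h₃ : ∫ x in b..(1 : ℝ), cellWeight ε ψ x = 0 := by
    rw [intervalIntegral.integral_congr (g := fun _ => 0) fun x hx => ?_]
    · simp
    rw [uIcc_of_le hb] at hx
    exact cellWeight_eq_zero (hb2 ▸ pow_le_pow_left₀ (ha.trans hab) hx.1 2)
  rw [G16_eq_intervalIntegral, ← intervalIntegral.integral_add_adjacent_intervals (hi 0 a) (hi a 1),
    ← intervalIntegral.integral_add_adjacent_intervals (hi a b) (hi b 1), h₁, h₂, h₃, add_zero]

lemma sqrt_sub_G16_bounds {ε ψ : ℝ} (hε : 0 < ε) (hεψ : ε ^ 2 ≤ ψ) (hψ : ψ ≤ 1) :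
    (√ψ - √(ψ - ε ^ 2)) * (1 - 2 / 3 * √(2 * √ψ) / √(√(ψ - ε ^ 2) + √ψ)) ≤ √ψ - G16 ε ψ ∧
      √ψ - G16 ε ψ ≤ (√ψ - √(ψ - ε ^ 2)) / 3 := by
  rw [G16_eq hε hεψ hψ]
  set a := √(ψ - ε ^ 2)
  set b := √ψ
  have ha : 0 ≤ a := Real.sqrt_nonneg _
  have hab : a ≤ b := Real.sqrt_le_sqrt (sub_le_self _ (sq_nonneg ε))
  have ha2 : a ^ 2 = ψ - ε ^ 2 := Real.sq_sqrt (sub_nonneg.2 hεψ)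
  have hb2 : b ^ 2 = ψ := Real.sq_sqrt (by nlinarith)
  have hs : 0 < √(a + b) := Real.sqrt_pos.2 (by nlinarith)
  have hst : √(a + b) * √(b - a) = ε := by
    rw [← Real.sqrt_mul (by linarith), show (a + b) * (b - a) = ε ^ 2 by nlinarith,
      Real.sqrt_sq hε.le]
  obtain ⟨hlow, hup⟩ := integral_sqrt_sub_sq_bounds ha hab hb2
  constructor
  · have : (∫ x in a..b, √(ψ - x ^ 2)) / ε ≤ (b - a) * (2 / 3 * √(2 * b) / √(a + b)) := by
      rw [div_le_iff₀ hε, ← hst]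
      calc _ ≤ _ := hup
        _ = _ := by field_simp
    nlinarith
  · have : 2 / 3 * (b - a) ≤ (∫ x in a..b, √(ψ - x ^ 2)) / ε := by
      rw [le_div_iff₀ hε, ← hst]
      calc _ = _ := by ring
        _ ≤ _ := hlow
    linarith

lemma sqrt_sub_le_G16 {ε ψ : ℝ} (hε : 0 < ε) (hεψ : ε ^ 2 ≤ ψ) (hψ : ψ ≤ 1) :
    √(ψ - ε ^ 2) ≤ G16 ε ψ := by
  have hab : √(ψ - ε ^ 2) ≤ √ψ := Real.sqrt_le_sqrt (sub_le_self _ (sq_nonneg ε))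
  linarith [(sqrt_sub_G16_bounds hε hεψ hψ).2]

lemma G16_le_sqrt {ε ψ : ℝ} (hε : 0 < ε) (hεψ : ε ^ 2 ≤ ψ) (hψ : ψ ≤ 1) :
    G16 ε ψ ≤ √ψ := by
  set a := √(ψ - ε ^ 2)
  set b := √ψ
  have ha : 0 ≤ a := Real.sqrt_nonneg _
  have hab : a ≤ b := Real.sqrt_le_sqrt (sub_le_self _ (sq_nonneg ε))
  have hb : 0 < b := Real.sqrt_pos.2 ((pow_pos hε 2).trans_le hεψ)
  have hs : 0 < √(a + b) := Real.sqrt_pos.2 (by linarith)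
  have hratio : 2 / 3 * √(2 * b) / √(a + b) ≤ 1 := by
    rw [div_le_one hs, Real.le_sqrt (by positivity) (by linarith), mul_pow,
      Real.sq_sqrt (by linarith)]
    linarith
  nlinarith [(sqrt_sub_G16_bounds hε hεψ hψ).1]

lemma sqrt_quarter : √(1 / 4 : ℝ) = 1 / 2 := by
  rw [Real.sqrt_eq_iff_mul_self_eq_of_pos (by norm_num)]
  norm_num

lemma exists_G16_eq_half {ε : ℝ} (hε : 0 < ε) (hε' : ε < 1 / 2) :
    ∃ ψ ∈ Icc (1 / 4 : ℝ) (1 / 4 + ε ^ 2), G16 ε ψ = 1 / 2 := by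
  have hε2 : ε ^ 2 < 1 / 4 := by nlinarith
  have hlo : G16 ε (1 / 4) ≤ 1 / 2 := sqrt_quarter ▸ G16_le_sqrt hε hε2.le (by norm_num)
  have hhi : 1 / 2 ≤ G16 ε (1 / 4 + ε ^ 2) := by
    have := sqrt_sub_le_G16 (ψ := 1 / 4 + ε ^ 2) hε (by linarith) (by linarith)
    rwa [add_sub_cancel_right, sqrt_quarter] at this
  exact intermediate_value_Icc (le_add_of_nonneg_right (sq_nonneg ε))
    (continuous_G16 ε).continuousOn ⟨hlo, hhi⟩

lemma G16_lt_G16 {ε ψ₁ ψ₂ : ℝ} (hε : 0 < ε) (h₀ : 0 ≤ ψ₁) (h₁ : ψ₁ ≤ 1) (h : ψ₁ < ψ₂) :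
    G16 ε ψ₁ < G16 ε ψ₂ := by
  rw [G16_eq_intervalIntegral, G16_eq_intervalIntegral]
  refine intervalIntegral.integral_lt_integral_of_continuousOn_of_le_of_exists_lt one_pos
    (continuous_cellWeight ε ψ₁).continuousOn (continuous_cellWeight ε ψ₂).continuousOn
    (fun x _ => cellWeight_mono hε.le h.le x)
    ⟨√ψ₁, ⟨Real.sqrt_nonneg _, Real.sqrt_le_one.2 h₁⟩, ?_⟩
  rw [cellWeight_eq_zero (Real.sq_sqrt h₀).ge, cellWeight, Real.sq_sqrt h₀,
    max_eq_left (by linarith)]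
  exact lt_min (div_pos (Real.sqrt_pos.2 (sub_pos.2 h)) hε) one_pos

lemma eq_of_G16_eq {ε ψ ψ' : ℝ} (hε : 0 < ε) (hψ₀ : 0 ≤ ψ) (hψ₁ : ψ ≤ 1) (hψ' : 0 ≤ ψ')
    (h : G16 ε ψ' = G16 ε ψ) : ψ' = ψ := by
  rcases lt_trichotomy ψ' ψ with hlt | heq | hgt
  · exact absurd h (G16_lt_G16 hε hψ' (hlt.le.trans hψ₁) hlt).ne
  · exact heq
  · exact absurd h (G16_lt_G16 hε hψ₀ hψ₁ hgt).ne'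

lemma sub_quarter_div_sq_bounds {ε ψ : ℝ} (hε : 0 < ε) (hεψ : ε ^ 2 ≤ ψ) (hψ : ψ ≤ 1)
    (hG : G16 ε ψ = 1 / 2) :
    (√ψ + 1 / 2) / (√(ψ - ε ^ 2) + √ψ) * (1 - 2 / 3 * √(2 * √ψ) / √(√(ψ - ε ^ 2) + √ψ))
        ≤ (ψ - 1 / 4) / ε ^ 2 ∧
      (ψ - 1 / 4) / ε ^ 2 ≤ (√ψ + 1 / 2) / (√(ψ - ε ^ 2) + √ψ) * (1 / 3) := by
  have hbounds := sqrt_sub_G16_bounds hε hεψ hψ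
  rw [hG] at hbounds
  set a := √(ψ - ε ^ 2)
  set b := √ψ
  have ha : 0 ≤ a := Real.sqrt_nonneg _
  have ha2 : a ^ 2 = ψ - ε ^ 2 := Real.sq_sqrt (sub_nonneg.2 hεψ)
  have hb2 : b ^ 2 = ψ := Real.sq_sqrt (by nlinarith)
  have hb : 0 ≤ b := Real.sqrt_nonneg _
  have hab : 0 < b - a := by nlinarith [pow_pos hε 2]
  have hfactor : 0 < (b + 1 / 2) / (a + b) := div_pos (by linarith) (by linarith)
  have hratio : (ψ - 1 / 4) / ε ^ 2 = (b + 1 / 2) / (a + b) * ((b - 1 / 2) / (b - a)) := by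
    rw [show ψ - 1 / 4 = (b + 1 / 2) * (b - 1 / 2) by nlinarith,
      show ε ^ 2 = (a + b) * (b - a) by nlinarith, mul_div_mul_comm]
  rw [hratio]
  constructor
  · exact mul_le_mul_of_nonneg_left ((le_div_iff₀ hab).2 (by linarith)) hfactor.le
  · exact mul_le_mul_of_nonneg_left ((div_le_iff₀ hab).2 (by linarith)) hfactor.le

lemma tendsto_sq_nhdsGT_zero : Tendsto (fun ε : ℝ => ε ^ 2) (𝓝[>] 0) (𝓝 0) :=
  ((continuous_pow 2).tendsto' 0 0 (by norm_num)).mono_left nhdsWithin_le_nhds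

lemma tendsto_sub_quarter_div_sq {Ψ : ℝ → ℝ} (hΨ : Tendsto Ψ (𝓝[>] 0) (𝓝 (1 / 4)))
    (hG : ∀ᶠ ε in 𝓝[>] 0, ε ^ 2 ≤ Ψ ε ∧ Ψ ε ≤ 1 ∧ G16 ε (Ψ ε) = 1 / 2) :
    Tendsto (fun ε => (Ψ ε - 1 / 4) / ε ^ 2) (𝓝[>] 0) (𝓝 (1 / 3)) := by
  have hb : Tendsto (fun ε => √(Ψ ε)) (𝓝[>] 0) (𝓝 (1 / 2)) := sqrt_quarter ▸ hΨ.sqrt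
  have ha : Tendsto (fun ε => √(Ψ ε - ε ^ 2)) (𝓝[>] 0) (𝓝 (1 / 2)) := by
    have := (hΨ.sub tendsto_sq_nhdsGT_zero).sqrt
    rwa [sub_zero, sqrt_quarter] at this
  have hfactor : Tendsto (fun ε => (√(Ψ ε) + 1 / 2) / (√(Ψ ε - ε ^ 2) + √(Ψ ε))) (𝓝[>] 0)
      (𝓝 1) := by
    have := (hb.add_const (1 / 2)).div (ha.add hb) (by norm_num)
    rwa [show (1 / 2 + 1 / 2) / (1 / 2 + 1 / 2) = (1 : ℝ) by norm_num] at this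
  have hcorr : Tendsto (fun ε => 1 - 2 / 3 * √(2 * √(Ψ ε)) / √(√(Ψ ε - ε ^ 2) + √(Ψ ε)))
      (𝓝[>] 0) (𝓝 (1 / 3)) := by
    have := (tendsto_const_nhds (x := (1 : ℝ))).sub (((tendsto_const_nhds (x := (2 / 3 : ℝ))).mul
      (hb.const_mul 2).sqrt).div (ha.add hb).sqrt (by norm_num))
    rwa [show (1 : ℝ) - 2 / 3 * √(2 * (1 / 2)) / √(1 / 2 + 1 / 2) = 1 / 3 by norm_num] at this
  have hlower := hfactor.mul hcorr
  have hupper := hfactor.mul_const (1 / 3)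
  rw [one_mul] at hlower hupper
  refine tendsto_of_tendsto_of_tendsto_of_le_of_le' hlower hupper ?_ ?_
  all_goals
    filter_upwards [hG, self_mem_nhdsWithin] with ε ⟨hεΨ, hΨ₁, hGε⟩ hε
  · exact (sub_quarter_div_sq_bounds hε hεΨ hΨ₁ hGε).1
  · exact (sub_quarter_div_sq_bounds hε hεΨ hΨ₁ hGε).2

lemma exists_G16_root_family :
    ∃ Ψ : ℝ → ℝ, ∀ ε ∈ Ioo (0 : ℝ) (1 / 2),
      Ψ ε ∈ Icc (1 / 4) (1 / 4 + ε ^ 2) ∧ G16 ε (Ψ ε) = 1 / 2 := by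
  have hsol (ε : ℝ) :
      ∃ ψ, ε ∈ Ioo 0 (1 / 2) → ψ ∈ Icc (1 / 4) (1 / 4 + ε ^ 2) ∧ G16 ε ψ = 1 / 2 := by
    by_cases hε : ε ∈ Ioo 0 (1 / 2)
    · obtain ⟨ψ, hψ, hG⟩ := exists_G16_eq_half hε.1 hε.2
      exact ⟨ψ, fun _ => ⟨hψ, hG⟩⟩
    · exact ⟨0, fun h => absurd h hε⟩
  choose Ψ hΨ using hsol
  exact ⟨Ψ, hΨ⟩

lemma tendsto_quarter_of_mem_Icc {Ψ : ℝ → ℝ}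
    (h : ∀ᶠ ε in 𝓝[>] 0, Ψ ε ∈ Icc (1 / 4 : ℝ) (1 / 4 + ε ^ 2)) :
    Tendsto Ψ (𝓝[>] 0) (𝓝 (1 / 4)) := by
  have hupper : Tendsto (fun ε : ℝ => 1 / 4 + ε ^ 2) (𝓝[>] 0) (𝓝 (1 / 4)) := by
    simpa only [add_zero] using tendsto_sq_nhdsGT_zero.const_add (1 / 4 : ℝ)
  exact tendsto_of_tendsto_of_tendsto_of_le_of_le' tendsto_const_nhds hupper
    (h.mono fun _ hε => hε.1) (h.mono fun _ hε => hε.2)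

/-- for all sufficiently small `ε > 0` there is a unique `ψ^ε > 0` with
`G^ε(ψ^ε) = 1/2`, and as `ε → 0⁺` one has `ψ^ε → 1/4` and `(ψ^ε − 1/4)/ε² → 1/3`;
in particular the quadratic convergence rate is tight. -/
theorem stmt16 :
    ∃ ε₁ : ℝ, 0 < ε₁ ∧
      ∃ Ψ : ℝ → ℝ,
        (∀ ε ∈ Set.Ioo (0 : ℝ) ε₁,
          0 < Ψ ε ∧ G16 ε (Ψ ε) = 1 / 2 ∧
          ∀ ψ' : ℝ, 0 < ψ' → G16 ε ψ' = 1 / 2 → ψ' = Ψ ε) ∧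
        Filter.Tendsto Ψ (nhdsWithin 0 (Set.Ioi 0)) (nhds (1 / 4)) ∧
        Filter.Tendsto (fun ε => (Ψ ε - 1 / 4) / ε ^ 2) (nhdsWithin 0 (Set.Ioi 0))
          (nhds (1 / 3)) := by
  obtain ⟨Ψ, hΨ⟩ := exists_G16_root_family
  have hsmall : ∀ ε ∈ Ioo (0 : ℝ) (1 / 2), ε ^ 2 ≤ Ψ ε ∧ Ψ ε ≤ 1 := fun ε hε => by
    obtain ⟨⟨h₁, h₂⟩, -⟩ := hΨ ε hε
    constructor <;> nlinarith [hε.1, hε.2]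
  have hnear : ∀ᶠ ε in 𝓝[>] (0 : ℝ), ε ∈ Ioo (0 : ℝ) (1 / 2) := Ioo_mem_nhdsGT (by norm_num)
  have hlim : Tendsto Ψ (𝓝[>] 0) (𝓝 (1 / 4)) :=
    tendsto_quarter_of_mem_Icc (hnear.mono fun ε hε => (hΨ ε hε).1)
  refine ⟨1 / 2, by norm_num, Ψ, fun ε hε => ?_, hlim, tendsto_sub_quarter_div_sq hlim ?_⟩
  · obtain ⟨⟨hΨ₀, -⟩, hG⟩ := hΨ ε hε
    refine ⟨by linarith, hG, fun ψ' hψ' hG' => ?_⟩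
    exact eq_of_G16_eq hε.1 (by linarith) (hsmall ε hε).2 hψ'.le (hG'.trans hG.symm)
  · exact hnear.mono fun ε hε => ⟨(hsmall ε hε).1, (hsmall ε hε).2, (hΨ ε hε).2⟩
end
end
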